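/- arXiv:2207.12765 — 2 statements merged into one kernel-verified Lean document; each statement's English description precedes it below -/
import Mathlib

section
/- Let X be a strongly 0-dimensional metrizable space, let d ∈ Met(X), and let ε > 0. Then there exist r ∈ (0,1) and a metric D ∈ Met(X) such that every value of D lies in the set E(ε/5, r), and sup_{x,y∈X} |d(x,y) − D(x,y)| ≤ ε. -/
open Set
open scoped ENNReal

/-- The space `Met(X)` of metrics generating the topology of `X`. -/
def MetricCompat (X : Type*) [t : TopologicalSpace X] : Type _ :=
  { m : MetricSpace X // m.toUniformSpace.toTopologicalSpace = t }

namespace MetricCompat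

variable {X : Type*} [TopologicalSpace X]

/-- The distance function of an element of `Met(X)`. -/
noncomputable def dist (d : MetricCompat X) (x y : X) : ℝ := d.1.dist x y

/-- The supremum distance `D_X`, valued in `[0,∞]`. -/
noncomputable def supDist (d e : MetricCompat X) : ℝ≥0∞ :=
  ⨆ p : X × X, ENNReal.ofReal |d.dist p.1 p.2 - e.dist p.1 p.2|

/-- The topology on `Met(X)` induced by the open balls of `D_X`. -/
noncomputable instance : TopologicalSpace (MetricCompat X) :=
  TopologicalSpace.generateFrom
    { U | ∃ (d : MetricCompat X) (r : ℝ≥0∞), 0 < r ∧ U = { e | supDist d e < r } }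

end MetricCompat

/-- A space is strongly `0`-dimensional if disjoint closed sets are separated by a clopen set. -/
def StronglyZeroDim (X : Type*) [TopologicalSpace X] : Prop :=
  ∀ A B : Set X, IsClosed A → IsClosed B → Disjoint A B →
    ∃ V : Set X, IsClopen V ∧ A ⊆ V ∧ Disjoint V B

/-- The set `O(η, u) = {0} ∪ {η·uⁿ : n ∈ ℤ≥0}`. -/
def OSet (η u : ℝ) : Set ℝ := {0} ∪ { x : ℝ | ∃ n : ℕ, x = η * u ^ n }

/-- The set `E(η, u) = η·ℤ≥0 + O(η, u) + O(η, u)`. -/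
def ESet (η u : ℝ) : Set ℝ :=
  { x : ℝ | ∃ (n : ℕ), ∃ a ∈ OSet η u, ∃ b ∈ OSet η u, x = η * n + a + b }

/-
Strong zero-dimensionality and paracompactness turn every open cover into a partition by clopen
sets: refine it to a locally finite clopen cover and send each point to the least member
containing it, for a well-order of the indices. Doing this for the covers by balls of radius
`η / 2ⁿ` gives locally constant maps `cₙ : X → X` with `d(x, cₙ x) < η / 2ⁿ`. The
first-difference ultrametric of the codes `n ↦ cₙ x` takes values in `{0} ∪ {2⁻ⁿ}` and, scaled by
`η`, generates the topology of `X`. Its maximum with `η ⌈d(c₀ x, c₀ y) / η⌉`, which lies in `ηℕ`,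
is within `3η` of `d`, and vanishes on the pieces of `c₀`, is the required metric, with `η = ε/5`.
-/

open Topology

section ClopenPartition

variable {X : Type*} [TopologicalSpace X]

theorem LocallyFinite.exists_isLocallyConstant_mem {ι : Type*} {W : ι → Set X}
    (hW : LocallyFinite W) (hWc : ∀ i, IsClopen (W i)) (hcov : ∀ x, ∃ i, x ∈ W i) :
    ∃ c : X → ι, IsLocallyConstant c ∧ ∀ x, x ∈ W (c x) := by
  obtain ⟨_, _⟩ := exists_wellFoundedLT ι
  let c : X → ι := fun x => wellFounded_lt.min {i : ι | x ∈ W i} (hcov x)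
  have hc_mem : ∀ x, x ∈ W (c x) := fun x => wellFounded_lt.min_mem {i : ι | x ∈ W i} (hcov x)
  refine ⟨c, (IsLocallyConstant.iff_eventually_eq c).2 fun x => ?_, hc_mem⟩
  filter_upwards [(hWc (c x)).isOpen.mem_nhds (hc_mem x),
    hW.iInter_compl_mem_nhds (fun i => (hWc i).isClosed) x] with y hy hy_out
  have hyx : ∀ i, y ∈ W i → x ∈ W i := fun i hi =>
    by_contra fun hxi => mem_iInter₂.1 hy_out i hxi hi
  exact le_antisymm (wellFounded_lt.min_le (show c x ∈ {i | y ∈ W i} from hy))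
    (wellFounded_lt.min_le (show c y ∈ {i | x ∈ W i} from hyx _ (hc_mem y)))

theorem StronglyZeroDim.exists_isLocallyConstant_mem [ParacompactSpace X] [NormalSpace X]
    (hX : StronglyZeroDim X) {ι : Type*} {U : ι → Set X} (hU : ∀ i, IsOpen (U i))
    (hcov : ⋃ i, U i = univ) :
    ∃ c : X → ι, IsLocallyConstant c ∧ ∀ x, x ∈ U (c x) := by
  obtain ⟨v, hvo, hvcov, hvlf, hvU⟩ := precise_refinement U hU hcov
  obtain ⟨w, hwcov, -, hwv⟩ :=
    exists_iUnion_eq_closure_subset hvo (fun x => hvlf.point_finite x) hvcov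
  have hsep : ∀ i, ∃ V, IsClopen V ∧ closure (w i) ⊆ V ∧ V ⊆ v i := fun i => by
    obtain ⟨V, hV, hwV, hVv⟩ := hX _ _ isClosed_closure (hvo i).isClosed_compl
      (disjoint_compl_right_iff_subset.2 (hwv i))
    exact ⟨V, hV, hwV, disjoint_compl_right_iff_subset.1 hVv⟩
  choose W hWc hwW hWv using hsep
  have hWcov : ∀ x, ∃ i, x ∈ W i := fun x => by
    obtain ⟨i, hi⟩ := mem_iUnion.1 (hwcov.symm ▸ mem_univ x : x ∈ ⋃ i, w i)
    exact ⟨i, hwW i (subset_closure hi)⟩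
  obtain ⟨c, hc, hcW⟩ := (hvlf.subset hWv).exists_isLocallyConstant_mem hWc hWcov
  exact ⟨c, hc, fun x => hvU _ (hWv _ (hcW x))⟩

end ClopenPartition

theorem StronglyZeroDim.exists_isLocallyConstant_dist_lt {Y : Type*} [MetricSpace Y]
    (hY : StronglyZeroDim Y) {δ : ℝ} (hδ : 0 < δ) :
    ∃ c : Y → Y, IsLocallyConstant c ∧ ∀ x, dist x (c x) < δ :=
  hY.exists_isLocallyConstant_mem (fun _ => Metric.isOpen_ball)
    (iUnion_eq_univ_iff.2 fun x => ⟨x, Metric.mem_ball_self hδ⟩)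

theorem isOpen_iff_of_forall_dist_lt {Y : Type*} [PseudoMetricSpace Y] {D : Y → Y → ℝ}
    (hD_dist : ∀ x, ∀ ε > 0, ∃ δ > 0, ∀ y, D x y < δ → dist x y < ε)
    (hD_nhds : ∀ x, ∀ ε > 0, ∀ᶠ y in 𝓝 x, D x y < ε) (s : Set Y) :
    IsOpen s ↔ ∀ x ∈ s, ∃ ε > 0, ∀ y, D x y < ε → y ∈ s := by
  refine ⟨fun hs x hx => ?_, fun hs => isOpen_iff_mem_nhds.2 fun x hx => ?_⟩
  · obtain ⟨ε, hε, hball⟩ := Metric.isOpen_iff.1 hs x hx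
    obtain ⟨δ, hδ, hDδ⟩ := hD_dist x ε hε
    exact ⟨δ, hδ, fun y hy => hball (Metric.mem_ball'.2 (hDδ y hy))⟩
  · obtain ⟨ε, hε, hDs⟩ := hs x hx
    exact Filter.mem_of_superset (hD_nhds x ε hε) fun y hy => hDs y hy

section CeilDist

variable {α : Type*} [PseudoMetricSpace α] {η : ℝ}

noncomputable def ceilDist (η : ℝ) (a b : α) : ℝ := η * ⌈dist a b / η⌉₊

theorem ceilDist_triangle (hη : 0 ≤ η) (a b c : α) :
    ceilDist η a c ≤ ceilDist η a b + ceilDist η b c := by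
  have hceil : ⌈dist a c / η⌉₊ ≤ ⌈dist a b / η⌉₊ + ⌈dist b c / η⌉₊ := by
    refine Nat.ceil_le.2 ?_
    calc dist a c / η ≤ dist a b / η + dist b c / η := by
          rw [← add_div]; exact div_le_div_of_nonneg_right (dist_triangle a b c) hη
      _ ≤ _ := by push_cast; exact add_le_add (Nat.le_ceil _) (Nat.le_ceil _)
  unfold ceilDist
  rw [← mul_add]
  exact mul_le_mul_of_nonneg_left (by exact_mod_cast hceil) hη

theorem dist_le_ceilDist (hη : 0 < η) (a b : α) : dist a b ≤ ceilDist η a b :=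
  (div_le_iff₀' hη).1 (Nat.le_ceil _)

theorem ceilDist_lt_dist_add (hη : 0 < η) (a b : α) : ceilDist η a b < dist a b + η := by
  have := mul_lt_mul_of_pos_left
    (Nat.ceil_lt_add_one (div_nonneg (dist_nonneg (x := a) (y := b)) hη.le)) hη
  rwa [mul_add, mul_one, mul_div_cancel₀ _ hη.ne'] at this

end CeilDist

section ApproxDist

attribute [local instance] PiNat.dist

variable {Y : Type*} [MetricSpace Y] {η : ℝ} {c : ℕ → Y → Y}

/-- The distance between codes is `PiNat.dist`, i.e. `2⁻ⁿ` for the first `n` with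
`c n x ≠ c n y`. -/
noncomputable def approxDist (η : ℝ) (c : ℕ → Y → Y) (x y : Y) : ℝ :=
  max (ceilDist η (c 0 x) (c 0 y)) (η * dist (fun n => c n x) (fun n => c n y))

theorem approxDist_self (x : Y) : approxDist η c x x = 0 := by
  simp [approxDist, ceilDist, PiNat.dist_self]

theorem approxDist_comm (x y : Y) : approxDist η c x y = approxDist η c y x := by
  simp only [approxDist, ceilDist, dist_comm (c 0 x), PiNat.dist_comm (fun n => c n x)]

theorem approxDist_triangle (hη : 0 ≤ η) (x y z : Y) :
    approxDist η c x z ≤ approxDist η c x y + approxDist η c y z := by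
  refine max_le ((ceilDist_triangle hη _ _ _).trans (add_le_add (le_max_left _ _)
    (le_max_left _ _))) ?_
  calc η * dist (fun n => c n x) (fun n => c n z)
      ≤ η * dist (fun n => c n x) (fun n => c n y) +
          η * dist (fun n => c n y) (fun n => c n z) := by
        rw [← mul_add]; exact mul_le_mul_of_nonneg_left (PiNat.dist_triangle _ _ _) hη
    _ ≤ _ := add_le_add (le_max_right _ _) (le_max_right _ _)

theorem approxDist_mem_ESet (x y : Y) : approxDist η c x y ∈ ESet η (1 / 2) := by
  rcases max_choice (ceilDist η (c 0 x) (c 0 y)) (η * dist (fun n => c n x) (fun n => c n y))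
    with h | h <;> rw [approxDist, h]
  · exact ⟨⌈dist (c 0 x) (c 0 y) / η⌉₊, 0, Or.inl rfl, 0, Or.inl rfl, by simp [ceilDist]⟩
  · refine ⟨0, η * dist (fun n => c n x) (fun n => c n y), ?_, 0, Or.inl rfl, by simp⟩
    by_cases hxy : (fun n => c n x) = fun n => c n y
    · exact Or.inl (by simp [hxy, PiNat.dist_self])
    · exact Or.inr ⟨_, by rw [PiNat.dist_eq_of_ne hxy]⟩

theorem abs_dist_sub_approxDist_le (hη : 0 < η) (hc_dist : ∀ x, dist x (c 0 x) ≤ η) (x y : Y) :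
    |dist x y - approxDist η c x y| ≤ 3 * η := by
  have hlow : dist x y ≤ dist (c 0 x) (c 0 y) + 2 * η := by
    linarith [dist_triangle4 x (c 0 x) (c 0 y) y, hc_dist x, hc_dist y, dist_comm y (c 0 y)]
  have hup : dist (c 0 x) (c 0 y) ≤ dist x y + 2 * η := by
    linarith [dist_triangle4 (c 0 x) x y (c 0 y), hc_dist x, hc_dist y, dist_comm x (c 0 x)]
  have hcode : η * dist (fun n => c n x) (fun n => c n y) ≤ η :=
    mul_le_of_le_one_right hη.le (PiNat.dist_le_one _ _)
  have hceil_le : ceilDist η (c 0 x) (c 0 y) ≤ approxDist η c x y := le_max_left _ _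
  have hle : approxDist η c x y ≤ dist x y + 3 * η :=
    max_le (by linarith [ceilDist_lt_dist_add hη (c 0 x) (c 0 y)])
      (by linarith [dist_nonneg (x := x) (y := y)])
  rw [abs_sub_le_iff]
  constructor <;> linarith [dist_le_ceilDist hη (c 0 x) (c 0 y)]

theorem dist_lt_of_approxDist_lt (hη : 0 < η)
    (hc_dist : ∀ n x, dist x (c n x) < η * (1 / 2) ^ n) {x y : Y} {n : ℕ}
    (h : approxDist η c x y < η * (1 / 2) ^ n) :
    dist x y < 2 * (η * (1 / 2) ^ n) := by
  have hcode : dist (fun n => c n x) (fun n => c n y) < (1 / 2) ^ n :=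
    lt_of_mul_lt_mul_left ((le_max_right _ _).trans_lt h) hη.le
  have hxy : c n x = c n y := PiNat.apply_eq_of_dist_lt hcode le_rfl
  calc dist x y ≤ dist x (c n x) + dist y (c n y) := by
        rw [hxy]; exact dist_triangle_right _ _ _
    _ < 2 * (η * (1 / 2) ^ n) := by linarith [hc_dist n x, hc_dist n y]

theorem exists_pos_forall_approxDist_lt_imp_dist_lt (hη : 0 < η)
    (hc_dist : ∀ n x, dist x (c n x) < η * (1 / 2) ^ n) {ε : ℝ} (hε : 0 < ε) :
    ∃ δ > 0, ∀ x y, approxDist η c x y < δ → dist x y < ε := by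
  obtain ⟨n, hn⟩ := exists_pow_lt_of_lt_one (by positivity : 0 < ε / (2 * η))
    (by norm_num : (1 / 2 : ℝ) < 1)
  refine ⟨η * (1 / 2) ^ n, by positivity,
    fun x y h => (dist_lt_of_approxDist_lt hη hc_dist h).trans ?_⟩
  rw [lt_div_iff₀ (by positivity)] at hn
  linarith

theorem eq_of_approxDist_eq_zero (hη : 0 < η)
    (hc_dist : ∀ n x, dist x (c n x) < η * (1 / 2) ^ n) {x y : Y} (h : approxDist η c x y = 0) :
    x = y := by
  refine dist_le_zero.1 (forall_gt_iff_le.1 fun ε hε => ?_)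
  obtain ⟨δ, hδ, hδε⟩ := exists_pos_forall_approxDist_lt_imp_dist_lt hη hc_dist hε
  exact hδε x y (h ▸ hδ)

theorem eventually_approxDist_lt (hη : 0 < η) (hc : ∀ n, IsLocallyConstant (c n)) (x : Y)
    {ε : ℝ} (hε : 0 < ε) : ∀ᶠ y in 𝓝 x, approxDist η c x y < ε := by
  obtain ⟨n, hn⟩ := exists_pow_lt_of_lt_one (div_pos hε hη) (by norm_num : (1 / 2 : ℝ) < 1)
  have hsmall : η * (1 / 2) ^ (n + 1) < ε := by
    rw [lt_div_iff₀ hη] at hn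
    calc η * (1 / 2) ^ (n + 1) ≤ η * (1 / 2) ^ n :=
          mul_le_mul_of_nonneg_left (pow_le_pow_of_le_one (by norm_num) (by norm_num) n.le_succ)
            hη.le
      _ < ε := by linarith
  filter_upwards [(Finset.range (n + 1)).eventually_all.2 fun k _ => (hc k).eventually_eq x]
    with y hy
  have hcyl : (fun k => c k y) ∈ PiNat.cylinder (fun k => c k x) (n + 1) :=
    PiNat.mem_cylinder_iff.2 fun k hk => hy k (Finset.mem_range.2 hk)
  refine lt_of_le_of_lt (max_le ?_ ?_) hsmall
  · rw [ceilDist, hy 0 (by simp), dist_self, zero_div, Nat.ceil_zero, Nat.cast_zero, mul_zero]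
    positivity
  · rw [PiNat.dist_comm]
    exact mul_le_mul_of_nonneg_left (PiNat.mem_cylinder_iff_dist_le.1 hcyl) hη.le

theorem isOpen_iff_approxDist (hη : 0 < η) (hc : ∀ n, IsLocallyConstant (c n))
    (hc_dist : ∀ n x, dist x (c n x) < η * (1 / 2) ^ n) (s : Set Y) :
    IsOpen s ↔ ∀ x ∈ s, ∃ ε > 0, ∀ y, approxDist η c x y < ε → y ∈ s :=
  isOpen_iff_of_forall_dist_lt
    (fun x _ hε => (exists_pos_forall_approxDist_lt_imp_dist_lt hη hc_dist hε).imp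
      fun _ ⟨hδ, h⟩ => ⟨hδ, fun y => h x y⟩)
    (fun x _ hε => eventually_approxDist_lt hη hc x hε) s

theorem exists_metricCompat_dist_eq_approxDist (hη : 0 < η)
    (hc : ∀ n, IsLocallyConstant (c n)) (hc_dist : ∀ n x, dist x (c n x) < η * (1 / 2) ^ n) :
    ∃ D : MetricCompat Y, ∀ x y, D.dist x y = approxDist η c x y :=
  ⟨⟨MetricSpace.ofDistTopology (approxDist η c) approxDist_self approxDist_comm
    (approxDist_triangle hη.le) (isOpen_iff_approxDist hη hc hc_dist)
    fun _ _ => eq_of_approxDist_eq_zero hη hc_dist, rfl⟩, fun _ _ => rfl⟩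

end ApproxDist

theorem dense_approx_by_ESet_valued_metric_general
    {X : Type*} [TopologicalSpace X]
    (hX : StronglyZeroDim X) (d : MetricCompat X) (ε : ℝ) (hε : 0 < ε) :
    ∃ r ∈ Set.Ioo (0 : ℝ) 1, ∃ D : MetricCompat X,
      (∀ x y : X, D.dist x y ∈ ESet (ε / 5) r) ∧
      (⨆ p : X × X, ENNReal.ofReal |d.dist p.1 p.2 - D.dist p.1 p.2|) ≤
        ENNReal.ofReal ε := by
  obtain ⟨m, rfl⟩ := d
  let := m
  have hη : 0 < ε / 5 := by positivity
  choose c hc hc_dist using fun n : ℕ =>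
    hX.exists_isLocallyConstant_dist_lt (by positivity : 0 < ε / 5 * (1 / 2) ^ n)
  obtain ⟨D, hD⟩ := exists_metricCompat_dist_eq_approxDist hη hc hc_dist
  refine ⟨1 / 2, by norm_num, D, fun x y => hD x y ▸ approxDist_mem_ESet x y,
    iSup_le fun p => ENNReal.ofReal_le_ofReal ?_⟩
  have hc_dist₀ : ∀ x, dist x (c 0 x) ≤ ε / 5 := fun x => by simpa using (hc_dist 0 x).le
  calc |dist p.1 p.2 - D.dist p.1 p.2| ≤ 3 * (ε / 5) :=
        hD p.1 p.2 ▸ abs_dist_sub_approxDist_le hη hc_dist₀ p.1 p.2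
    _ ≤ ε := by linarith

/-- Theorem 2.9: for a strongly `0`-dimensional metrizable space `X`, every `d ∈ Met(X)` is
`ε`-approximated by a metric `D ∈ Met(X)` taking values in `E(ε/5, r)` for some `r ∈ (0,1)`. -/
theorem dense_approx_by_ESet_valued_metric
    {X : Type*} [TopologicalSpace X] [TopologicalSpace.MetrizableSpace X]
    (hX : StronglyZeroDim X) (d : MetricCompat X) (ε : ℝ) (hε : 0 < ε) :
    ∃ r ∈ Set.Ioo (0 : ℝ) 1, ∃ D : MetricCompat X,
      (∀ x y : X, D.dist x y ∈ ESet (ε / 5) r) ∧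
      (⨆ p : X × X, ENNReal.ofReal |d.dist p.1 p.2 - D.dist p.1 p.2|) ≤
        ENNReal.ofReal ε :=
  dense_approx_by_ESet_valued_metric_general hX d ε hε
end

section
/- Let X be a metrizable space and q ∈ ℤ≥0. Then the set Neb_q(X) of all metrics d ∈ Met(X) for which there exists a q-nebula A with all values of d lying in A is an open subset of the space (Met(X), D_X). -/
open Set
open scoped ENNReal

/-- A closed subset `A` of `[0,∞)` is a `q`-nebula if it is a disjoint union of closed
intervals `I 0, …, I k` with `0 ∈ I 0`, the intervals `I 0, …, I (k-1)` compact of diameter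
`< 2^{-q}`, and `I k` an unbounded closed interval contained in `(q, ∞)`. -/
def IsNebula (q : ℕ) (A : Set ℝ) : Prop :=
  IsClosed A ∧ A ⊆ Set.Ici 0 ∧
  ∃ (k : ℕ) (I : Fin (k + 1) → Set ℝ),
    A = ⋃ i, I i ∧
    (0 : ℝ) ∈ I 0 ∧
    (∀ i : Fin (k + 1), (i : ℕ) < k →
      ∃ a b : ℝ, a ≤ b ∧ I i = Set.Icc a b ∧ b - a < (2 : ℝ) ^ (-(q : ℤ))) ∧
    (∃ a : ℝ, I (Fin.last k) = Set.Ici a ∧ (q : ℝ) < a) ∧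
    Pairwise (Function.onFun Disjoint I)

/-!
If `d` takes values in a `q`-nebula `A = I₀ ∪ ⋯ ∪ I_k`, then for all small `ε > 0` the set
`cthickening ε A ∩ [0, ∞)` is again a `q`-nebula: each interval only grows by `2ε`, so the strict
bounds on the diameters and on `inf I_k` survive, and closed `ε`-thickenings of two disjoint closed
sets, one of them compact, stay disjoint for small `ε`. Every metric `e` with `D_X(d, e) < ε` takes
its values in this thickened nebula.
-/

open Metric Filter Topology

theorem Metric.cthickening_iUnion_of_isClosed {α ι : Type*} [PseudoMetricSpace α] [ProperSpace α]
    [Finite ι] {s : ι → Set α} (hs : ∀ i, IsClosed (s i)) {ε : ℝ} (hε : 0 ≤ ε) :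
    cthickening ε (⋃ i, s i) = ⋃ i, cthickening ε (s i) := by
  simp only [(isClosed_iUnion_of_finite hs).cthickening_eq_biUnion_closedBall hε, biUnion_iUnion,
    fun i => (hs i).cthickening_eq_biUnion_closedBall hε]

theorem Disjoint.eventually_disjoint_cthickening {α : Type*} [PseudoMetricSpace α] {s t : Set α}
    (hst : Disjoint s t) (hs : IsCompact s) (ht : IsClosed t) :
    ∀ᶠ ε in 𝓝 (0 : ℝ), Disjoint (cthickening ε s) (cthickening ε t) := by
  obtain ⟨δ, hδ, h⟩ := hst.exists_cthickenings hs ht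
  filter_upwards [eventually_lt_nhds hδ] with ε hε
  exact h.mono (cthickening_mono hε.le s) (cthickening_mono hε.le t)

theorem Real.cthickening_Icc {a b ε : ℝ} (hab : a ≤ b) (hε : 0 ≤ ε) :
    cthickening ε (Icc a b) = Icc (a - ε) (b + ε) := by
  rw [Real.Icc_eq_closedBall, cthickening_closedBall hε (by linarith), Real.Icc_eq_closedBall]
  congr 1 <;> ring

theorem Real.cthickening_Ici {c ε : ℝ} (hε : 0 ≤ ε) : cthickening ε (Ici c) = Ici (c - ε) := by
  ext x
  simp only [isClosed_Ici.cthickening_eq_biUnion_closedBall hε, mem_iUnion, Real.closedBall_eq_Icc,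
    mem_Icc, mem_Ici, exists_prop]
  constructor
  · rintro ⟨y, hy, hxy, -⟩
    linarith
  · intro hx
    exact ⟨max x c, le_max_right x c, by grind, by grind⟩

theorem eventually_cthickening_Icc_inter_Ici {a b r : ℝ} (hab : a ≤ b) (hb : 0 ≤ b)
    (hr : b - a < r) :
    ∀ᶠ ε in 𝓝[>] 0,
      ∃ a' b', a' ≤ b' ∧ cthickening ε (Icc a b) ∩ Ici 0 = Icc a' b' ∧ b' - a' < r := by
  filter_upwards [self_mem_nhdsWithin,
    nhdsWithin_le_nhds (eventually_lt_nhds (show 0 < (r - (b - a)) / 2 by linarith))]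
    with ε (hε : 0 < ε) hεr
  refine ⟨max (a - ε) 0, b + ε, max_le (by linarith) (by linarith), ?_, ?_⟩
  · ext x
    simp only [Real.cthickening_Icc hab hε.le, mem_inter_iff, mem_Icc, mem_Ici, max_le_iff]
    tauto
  · linarith [le_max_left (a - ε) 0]

theorem eventually_cthickening_Ici_inter_Ici {c s : ℝ} (hsc : s < c) :
    ∀ᶠ ε in 𝓝[>] 0, ∃ a, cthickening ε (Ici c) ∩ Ici 0 = Ici a ∧ s < a := by
  filter_upwards [self_mem_nhdsWithin, nhdsWithin_le_nhds (eventually_lt_nhds (sub_pos.2 hsc))]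
    with ε (hε : 0 < ε) hεc
  exact ⟨max (c - ε) 0, by rw [Real.cthickening_Ici hε.le, Ici_inter_Ici],
    by linarith [le_max_left (c - ε) 0]⟩

theorem IsNebula.eventually_cthickening_inter_Ici {q : ℕ} {A : Set ℝ} (hA : IsNebula q A) :
    ∀ᶠ ε in 𝓝[>] 0, IsNebula q (cthickening ε A ∩ Ici 0) := by
  obtain ⟨-, hA0, k, I, rfl, h0, hIcc, ⟨c, hlast, hqc⟩, hdisj⟩ := hA
  have hcompact : ∀ i : Fin (k + 1), (i : ℕ) < k → IsCompact (I i) := fun i hi => by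
    obtain ⟨a, b, -, hI, -⟩ := hIcc i hi
    exact hI ▸ isCompact_Icc
  have hclosed : ∀ i, IsClosed (I i) := fun i => by
    by_cases hi : (i : ℕ) < k
    · exact (hcompact i hi).isClosed
    · rw [Fin.eq_last_of_not_lt hi, hlast]
      exact isClosed_Ici
  have hdisj_eventually : ∀ i j, i ≠ j →
      ∀ᶠ ε in 𝓝[>] 0, Disjoint (cthickening ε (I i)) (cthickening ε (I j)) := fun i j hij => by
    refine nhdsWithin_le_nhds ?_
    by_cases hi : (i : ℕ) < k
    · exact (hdisj hij).eventually_disjoint_cthickening (hcompact i hi) (hclosed j)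
    · have hj : (j : ℕ) < k := by
        by_contra hj
        exact hij (by rw [Fin.eq_last_of_not_lt hi, Fin.eq_last_of_not_lt hj])
      exact ((hdisj hij.symm).eventually_disjoint_cthickening (hcompact j hj) (hclosed i)).mono
        fun _ h => h.symm
  have hIcc_eventually : ∀ i : Fin (k + 1), (i : ℕ) < k → ∀ᶠ ε in 𝓝[>] 0, ∃ a b : ℝ, a ≤ b ∧
      cthickening ε (I i) ∩ Ici 0 = Icc a b ∧ b - a < (2 : ℝ) ^ (-(q : ℤ)) := fun i hi => by
    obtain ⟨a, b, hab, hI, hdiam⟩ := hIcc i hi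
    have hb : 0 ≤ b := hA0 (mem_iUnion_of_mem i (hI ▸ right_mem_Icc.2 hab))
    exact hI ▸ eventually_cthickening_Icc_inter_Ici hab hb hdiam
  filter_upwards [self_mem_nhdsWithin,
    eventually_all.2 fun i => eventually_all.2 fun j =>
      eventually_imp_distrib_left.2 (hdisj_eventually i j),
    eventually_all.2 fun i => eventually_imp_distrib_left.2 (hIcc_eventually i),
    hlast ▸ eventually_cthickening_Ici_inter_Ici hqc] with ε (hε : 0 < ε) hdisjε hIccε hlastε
  refine ⟨isClosed_cthickening.inter isClosed_Ici, inter_subset_right, k,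
    fun i => cthickening ε (I i) ∩ Ici 0, ?_, ⟨self_subset_cthickening _ h0, self_mem_Ici⟩, hIccε,
    hlastε, fun i j hij => (hdisjε i j hij).mono inter_subset_left inter_subset_left⟩
  rw [cthickening_iUnion_of_isClosed hclosed hε.le, iUnion_inter]

namespace MetricCompat

variable {X : Type*} [TopologicalSpace X]

theorem dist_nonneg (d : MetricCompat X) (x y : X) : 0 ≤ d.dist x y :=
  @_root_.dist_nonneg X d.1.toPseudoMetricSpace x y

theorem supDist_self (d : MetricCompat X) : supDist d d = 0 := by
  simp [supDist]

theorem abs_dist_sub_lt_of_supDist_lt {d e : MetricCompat X} {ε : ℝ}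
    (h : supDist d e < ENNReal.ofReal ε) (x y : X) : |d.dist x y - e.dist x y| < ε :=
  (ENNReal.ofReal_lt_ofReal_iff'.1 ((le_iSup (fun p : X × X => ENNReal.ofReal
    |d.dist p.1 p.2 - e.dist p.1 p.2|) (x, y)).trans_lt h)).1

theorem isOpen_of_forall_exists_supDist_lt {S : Set (MetricCompat X)}
    (h : ∀ d ∈ S, ∃ r > 0, {e | supDist d e < r} ⊆ S) : IsOpen S := by
  refine isOpen_iff_forall_mem_open.2 fun d hd => ?_
  obtain ⟨r, hr, hsub⟩ := h d hd
  exact ⟨_, hsub, TopologicalSpace.isOpen_generateFrom_of_mem ⟨d, r, hr, rfl⟩,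
    (supDist_self d).trans_lt hr⟩

end MetricCompat

theorem nebula_valued_metrics_isOpen_general
    {X : Type*} [TopologicalSpace X] (q : ℕ) :
    IsOpen { d : MetricCompat X | ∃ A : Set ℝ, IsNebula q A ∧ ∀ x y : X, d.dist x y ∈ A } := by
  refine MetricCompat.isOpen_of_forall_exists_supDist_lt fun d ⟨A, hA, hdA⟩ => ?_
  obtain ⟨ε, hεA, hε⟩ := (hA.eventually_cthickening_inter_Ici.and self_mem_nhdsWithin).exists
  refine ⟨ENNReal.ofReal ε, ENNReal.ofReal_pos.2 hε, fun e he => ⟨_, hεA, fun x y => ⟨?_, ?_⟩⟩⟩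
  · refine mem_cthickening_of_dist_le _ _ _ _ (hdA x y) ?_
    rw [Real.dist_eq, abs_sub_comm]
    exact (MetricCompat.abs_dist_sub_lt_of_supDist_lt he x y).le
  · exact e.dist_nonneg x y

/-- Proposition 2.16: for a metrizable space `X` and `q ∈ ℤ≥0`, the set `Neb_q(X)` of metrics
taking values in some `q`-nebula is open in `(Met(X), D_X)`. -/
theorem nebula_valued_metrics_isOpen
    {X : Type*} [TopologicalSpace X] [TopologicalSpace.MetrizableSpace X] (q : ℕ) :
    IsOpen { d : MetricCompat X | ∃ A : Set ℝ, IsNebula q A ∧ ∀ x y : X, d.dist x y ∈ A } :=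
  nebula_valued_metrics_isOpen_general q
end
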